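/- arXiv:1312.5787 — 2 statements merged into one kernel-verified Lean document; each statement's English description precedes it below -/
import Mathlib

section
/- Let f ∈ L log L(B_r(x₀)) for r ∈ (0, 1/2], where B_r(x₀) ⊂ ℝ⁴. Then there exists a universal constant C > 0 such that ‖f‖_{L¹(B_r(x₀))} ≤ C (log(1/r))⁻¹ ‖f‖_{L log L(B_r(x₀))}. -/
open MeasureTheory Metric Real Filter

noncomputable section

abbrev E4 := EuclideanSpace ℝ (Fin 4)

/-- Non-increasing rearrangement of `|f|` on `[0, ∞)`. -/
def rearr (f : E4 → ℝ) (t : ℝ) : ℝ :=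
  sInf {s : ℝ | 0 ≤ s ∧ (volume {x : E4 | s < |f x|}).toReal ≤ t}

/-- The `L log L` seminorm of `f` on `Ω`:  `∫₀^{|Ω|} f*(t) log(2 + 1/t) dt`. -/
def LlogL (f : E4 → ℝ) (Ω : Set E4) : ℝ :=
  ∫ t in Set.Ioo 0 (volume Ω).toReal, rearr (Ω.indicator f) t * Real.log (2 + 1 / t)

/-- `f ∈ L log L(Ω)`. -/
def MemLlogL (f : E4 → ℝ) (Ω : Set E4) : Prop :=
  IntegrableOn (fun x => |f x| * Real.log (2 + |f x|)) Ω

/-!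
Put `g = 1_Ω f` and `V = |Ω|`. The rearrangement `g*` vanishes beyond `V` and is
equimeasurable with `|g|`, so `‖f‖_{L¹(Ω)} = ∫₀^V g*`; since `log (2 + 1/t) ≥ log (2 + 1/V)`
on `(0, V)`, this gives `log (2 + 1/V) ‖f‖_{L¹(Ω)} ≤ ‖f‖_{L log L(Ω)}`. For `Ω = B_r(x₀) ⊂ ℝ⁴`
one has `V ≤ 16 r⁴`, hence `log (1/r) ≤ 2 log (2 + 1/V)` when `r ≤ 1/2`.

As `LlogL` is a Bochner integral (zero when the integrand is not integrable), one also needs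
`∫₀^V g* log (2 + 1/t) < ∞`. This follows from `f ∈ L log L` by the Young-type inequality
`y log (2 + 1/t) ≤ 6 t^{-3/4} + 2 y log (2 + y)` and equimeasurability once more.
-/

open Set
open scoped ENNReal Topology

def distFn (g : E4 → ℝ) (s : ℝ) : ℝ≥0∞ := volume {x : E4 | s < |g x|}

section Rearrangement

variable {g : E4 → ℝ} {s t : ℝ}

theorem distFn_antitone (g : E4 → ℝ) : Antitone (distFn g) :=
  fun _ _ h => measure_mono fun _ hx => h.trans_lt hx

theorem distFn_le_volume_support (g : E4 → ℝ) (hs : 0 ≤ s) :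
    distFn g s ≤ volume (Function.support g) :=
  measure_mono fun _ hx => abs_pos.1 (hs.trans_lt hx)

theorem distFn_ne_top (hsupp : volume (Function.support g) ≠ ∞) (hs : 0 ≤ s) : distFn g s ≠ ∞ :=
  ne_top_of_le_ne_top hsupp (distFn_le_volume_support g hs)

theorem distFn_eq_iSup (g : E4 → ℝ) (s : ℝ) :
    distFn g s = ⨆ n : ℕ, distFn g (s + 1 / (n + 1)) := by
  have hU : {x : E4 | s < |g x|} = ⋃ n : ℕ, {x : E4 | s + 1 / (n + 1) < |g x|} := by
    ext x
    simp only [mem_iUnion, mem_ofPred_eq]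
    refine ⟨fun h => ?_, fun ⟨n, hn⟩ => (lt_add_of_pos_right s Nat.one_div_pos_of_nat).trans hn⟩
    obtain ⟨n, hn⟩ := exists_nat_one_div_lt (sub_pos.2 h)
    exact ⟨n, by linarith⟩
  rw [distFn, hU]
  refine Monotone.measure_iUnion fun n m hnm =>
    ofPred_subset_ofPred.2 fun x hx => lt_of_le_of_lt ?_ hx
  gcongr

theorem exists_distFn_le (hg : Measurable g) (hsupp : volume (Function.support g) ≠ ∞)
    (ht : 0 < t) : ∃ s, 0 ≤ s ∧ distFn g s ≤ ENNReal.ofReal t := by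
  have hempty : ⋂ n : ℕ, {x : E4 | (n : ℝ) < |g x|} = ∅ := by
    ext x
    simpa using exists_nat_ge |g x|
  have hlim : Tendsto (fun n : ℕ => distFn g n) atTop (𝓝 0) := by
    rw [← measure_empty (μ := (volume : Measure E4)), ← hempty]
    exact tendsto_measure_iInter_atTop
      (fun _ => (measurableSet_lt measurable_const hg.abs).nullMeasurableSet)
      (fun n m hnm => ofPred_subset_ofPred.2 fun x hx => (Nat.cast_le.2 hnm).trans_lt hx)
      ⟨0, distFn_ne_top hsupp (Nat.cast_nonneg 0)⟩
  obtain ⟨n, hn⟩ := (hlim.eventually (gt_mem_nhds (ENNReal.ofReal_pos.2 ht))).exists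
  exact ⟨n, n.cast_nonneg, hn.le⟩

theorem rearr_nonneg (g : E4 → ℝ) (t : ℝ) : 0 ≤ rearr g t :=
  Real.sInf_nonneg fun _ hx => hx.1

theorem rearr_le_iff (hg : Measurable g) (hsupp : volume (Function.support g) ≠ ∞)
    (ht : 0 < t) (hs : 0 ≤ s) : rearr g t ≤ s ↔ distFn g s ≤ ENNReal.ofReal t := by
  have hbdd : BddBelow {s | 0 ≤ s ∧ (distFn g s).toReal ≤ t} := ⟨0, fun _ h => h.1⟩
  have hne : {s | 0 ≤ s ∧ (distFn g s).toReal ≤ t}.Nonempty := by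
    obtain ⟨s, hs, hle⟩ := exists_distFn_le hg hsupp ht
    exact ⟨s, hs, ENNReal.toReal_le_of_le_ofReal ht.le hle⟩
  refine ⟨fun h => ?_, fun h => csInf_le hbdd ⟨hs, ENNReal.toReal_le_of_le_ofReal ht.le h⟩⟩
  rw [distFn_eq_iSup]
  refine iSup_le fun n => ?_
  obtain ⟨s', ⟨hs'0, hs'⟩, hlt⟩ := (csInf_lt_iff hbdd hne).1
    (h.trans_lt (lt_add_of_pos_right s Nat.one_div_pos_of_nat))
  exact (distFn_antitone g hlt.le).trans
    ((ENNReal.le_ofReal_iff_toReal_le (distFn_ne_top hsupp hs'0) ht.le).2 hs')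

theorem antitoneOn_rearr (hg : Measurable g) (hsupp : volume (Function.support g) ≠ ∞) :
    AntitoneOn (rearr g) (Ioi 0) := fun t₁ ht₁ _ ht₂ h =>
  (rearr_le_iff hg hsupp ht₂ (rearr_nonneg g t₁)).2 <|
    ((rearr_le_iff hg hsupp ht₁ (rearr_nonneg g t₁)).1 le_rfl).trans (ENNReal.ofReal_le_ofReal h)

theorem aemeasurable_rearr (hg : Measurable g) (hsupp : volume (Function.support g) ≠ ∞) :
    AEMeasurable (rearr g) (volume.restrict (Ioi 0)) :=
  aemeasurable_restrict_of_antitoneOn measurableSet_Ioi (antitoneOn_rearr hg hsupp)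

theorem rearr_eq_zero_of_volume_support_le (hg : Measurable g)
    (hsupp : volume (Function.support g) ≠ ∞) (ht : 0 < t)
    (hsuppt : volume (Function.support g) ≤ ENNReal.ofReal t) : rearr g t = 0 :=
  le_antisymm
    ((rearr_le_iff hg hsupp ht le_rfl).2 ((distFn_le_volume_support g le_rfl).trans hsuppt))
    (rearr_nonneg g t)

theorem volume_restrict_Ioi_rearr_preimage_Ioi (hg : Measurable g)
    (hsupp : volume (Function.support g) ≠ ∞) (hs : 0 ≤ s) :
    volume.restrict (Ioi 0) (rearr g ⁻¹' Ioi s) = distFn g s := by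
  have hfin := distFn_ne_top hsupp hs
  have hset : rearr g ⁻¹' Ioi s ∩ Ioi 0 = Ioo 0 (distFn g s).toReal := by
    ext t
    simp only [mem_inter_iff, mem_preimage, mem_Ioi, mem_Ioo]
    refine and_comm.trans (and_congr_right fun ht => ?_)
    rw [← not_le, rearr_le_iff hg hsupp ht hs, not_le, ENNReal.ofReal_lt_iff_lt_toReal ht.le hfin]
  rw [Measure.restrict_apply' measurableSet_Ioi, hset, Real.volume_Ioo, sub_zero,
    ENNReal.ofReal_toReal hfin]

-- Equimeasurability of `g*` and `|g|`; the masses at the value `0` (typically infinite) differ.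
theorem restrict_Ioi_map_rearr (hg : Measurable g) (hsupp : volume (Function.support g) ≠ ∞) :
    ((volume.restrict (Ioi 0)).map (rearr g)).restrict (Ioi 0) =
      (volume.map fun x => |g x|).restrict (Ioi 0) := by
  have hIoi : ∀ s, 0 ≤ s → (volume.restrict (Ioi 0)).map (rearr g) (Ioi s) =
      (volume.map fun x => |g x|) (Ioi s) := fun s hs => by
    rw [Measure.map_apply_of_aemeasurable (aemeasurable_rearr hg hsupp) measurableSet_Ioi,
      Measure.map_apply hg.abs measurableSet_Ioi,
      volume_restrict_Ioi_rearr_preimage_Ioi hg hsupp hs]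
    rfl
  have : IsFiniteMeasure (((volume.restrict (Ioi 0)).map (rearr g)).restrict (Ioi 0)) := by
    refine ⟨?_⟩
    rw [Measure.restrict_apply_univ, hIoi 0 le_rfl, Measure.map_apply hg.abs measurableSet_Ioi]
    exact (distFn_ne_top hsupp le_rfl).lt_top
  refine ext_of_generate_finite _ (BorelSpace.measurable_eq.trans (borel_eq_generateFrom_Ioi ℝ))
    isPiSystem_Ioi ?_ ?_
  · rintro _ ⟨s, rfl⟩
    rw [Measure.restrict_apply measurableSet_Ioi, Measure.restrict_apply measurableSet_Ioi,
      Ioi_inter_Ioi]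
    exact hIoi _ le_sup_right
  · rw [Measure.restrict_apply_univ, Measure.restrict_apply_univ]
    exact hIoi 0 le_rfl

theorem lintegral_comp_rearr (hg : Measurable g) (hsupp : volume (Function.support g) ≠ ∞)
    {φ : ℝ → ℝ≥0∞} (hφ : Measurable φ) (hφ0 : φ 0 = 0) :
    ∫⁻ t in Ioi 0, φ (rearr g t) = ∫⁻ x, φ |g x| := by
  have hφ' : ∀ y, 0 ≤ y → (Ioi 0).indicator φ y = φ y := fun y hy => by
    rcases hy.eq_or_lt with rfl | hy
    · simp [hφ0]
    · simp [hy]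
  have hφm : Measurable ((Ioi 0).indicator φ) := hφ.indicator measurableSet_Ioi
  calc ∫⁻ t in Ioi 0, φ (rearr g t)
      = ∫⁻ y, (Ioi 0).indicator φ y ∂(volume.restrict (Ioi 0)).map (rearr g) := by
        rw [lintegral_map' hφm.aemeasurable (aemeasurable_rearr hg hsupp)]
        simp only [hφ' _ (rearr_nonneg g _)]
    _ = ∫⁻ y in Ioi 0, φ y ∂(volume.restrict (Ioi 0)).map (rearr g) :=
        lintegral_indicator measurableSet_Ioi _
    _ = ∫⁻ y in Ioi 0, φ y ∂volume.map fun x => |g x| := by rw [restrict_Ioi_map_rearr hg hsupp]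
    _ = ∫⁻ x, φ |g x| := by
        rw [← lintegral_indicator measurableSet_Ioi, lintegral_map hφm hg.abs]
        simp only [hφ' _ (abs_nonneg _)]

theorem setLIntegral_Ioo_comp_rearr (hg : Measurable g)
    (hsupp : volume (Function.support g) ≠ ∞) {φ : ℝ → ℝ≥0∞} (hφ0 : φ 0 = 0) {V : ℝ}
    (hV : volume (Function.support g) ≤ ENNReal.ofReal V) :
    ∫⁻ t in Ioo 0 V, φ (rearr g t) = ∫⁻ t in Ioi 0, φ (rearr g t) := by
  have hzero : ∫⁻ t in Ioi 0 \ Iio V, φ (rearr g t) = 0 := by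
    refine (setLIntegral_congr_fun (measurableSet_Ioi.diff measurableSet_Iio) fun t ht => ?_).trans
      lintegral_zero
    rw [rearr_eq_zero_of_volume_support_le hg hsupp ht.1
      (hV.trans (ENNReal.ofReal_le_ofReal (not_lt.1 ht.2))), hφ0]
  rw [← lintegral_inter_add_sdiff _ (Ioi 0) measurableSet_Iio, Ioi_inter_Iio, hzero, add_zero]

end Rearrangement

theorem mul_log_two_add_one_div_le {y t : ℝ} (hy : 0 ≤ y) (ht : 0 < t) :
    y * log (2 + 1 / t) ≤ 6 * t ^ (-3 / 4 : ℝ) + 2 * (y * log (2 + y)) := by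
  -- Either the logarithms compare directly, or `y ≤ t^{-1/2}`, and then with `s = t^{-1/4} ≥ 1`
  -- the claim reduces to `s² log (2 + s⁴) ≤ 6 s³`.
  have hw : 0 ≤ t ^ (-3 / 4 : ℝ) := rpow_nonneg ht.le _
  rcases le_or_gt (2 + 1 / t) ((2 + y) ^ 2) with h | h
  · have hlog : log (2 + 1 / t) ≤ 2 * log (2 + y) := by
      rw [← Nat.cast_ofNat, ← log_pow]
      exact log_le_log (by positivity) h
    nlinarith [mul_le_mul_of_nonneg_left hlog hy]
  · set s := t ^ (-1 / 4 : ℝ) with hs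
    have hs4 : s ^ 4 = 1 / t := by
      rw [hs, ← rpow_natCast, ← rpow_mul ht.le, one_div, ← rpow_neg_one]
      norm_num
    have hs3 : t ^ (-3 / 4 : ℝ) = s ^ 3 := by
      rw [hs, ← rpow_natCast, ← rpow_mul ht.le]
      norm_num
    have hs0 : 0 < s := rpow_pos_of_pos ht _
    have hs1 : 1 ≤ s := by
      by_contra! hlt
      have : s ^ 4 ≤ 1 := pow_le_one₀ hs0.le hlt.le
      nlinarith
    have hys : y ≤ s ^ 2 := by
      refine abs_le_of_sq_le_sq' ?_ (by positivity) |>.2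
      nlinarith
    have hlog : log (2 + s ^ 4) ≤ 6 * s := by
      have h3 : log 3 ≤ 2 := by linarith [log_le_sub_one_of_pos (three_pos : (0:ℝ) < 3)]
      have hls : log s ≤ s - 1 := log_le_sub_one_of_pos hs0
      calc log (2 + s ^ 4) ≤ log (3 * s ^ 4) :=
            log_le_log (by positivity) (by nlinarith [one_le_pow₀ (n := 4) hs1])
        _ = log 3 + 4 * log s := by rw [log_mul (by norm_num) (by positivity), log_pow]; norm_num
        _ ≤ 6 * s := by linarith
    have hlog0 : 0 ≤ log (2 + 1 / t) := log_nonneg (by have := one_div_pos.2 ht; linarith)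
    calc y * log (2 + 1 / t) ≤ s ^ 2 * log (2 + s ^ 4) := by rw [hs4]; gcongr
      _ ≤ s ^ 2 * (6 * s) := by gcongr
      _ = 6 * t ^ (-3 / 4 : ℝ) := by rw [hs3]; ring
      _ ≤ 6 * t ^ (-3 / 4 : ℝ) + 2 * (y * log (2 + y)) :=
        le_add_of_nonneg_right (mul_nonneg zero_le_two (mul_nonneg hy (log_nonneg (by linarith))))

theorem log_one_div_le_two_mul_log_two_add_one_div {r t : ℝ} (hr0 : 0 < r) (hr : r ≤ 1 / 2)
    (ht : 0 < t) (htr : t ≤ 16 * r ^ 4) : log (1 / r) ≤ 2 * log (2 + 1 / t) := by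
  have hsq : 1 / r ≤ (2 + 1 / t) ^ 2 := by
    have hr3 : 2 * r ^ 4 ≤ r := by nlinarith [pow_le_pow_left₀ hr0.le hr 3]
    calc 1 / r ≤ 8 / (16 * r ^ 4) := by
          rw [div_le_div_iff₀ hr0 (by positivity)]; nlinarith
      _ ≤ 8 / t := by gcongr
      _ = 8 * (1 / t) := by ring
      _ ≤ (2 + 1 / t) ^ 2 := by nlinarith [sq_nonneg (1 / t - 2)]
  rw [← Nat.cast_ofNat, ← log_pow]
  exact log_le_log (by positivity) hsq

theorem volume_ball_le (x : E4) (r : ℝ) : volume (ball x r) ≤ ENNReal.ofReal (16 * r ^ 4) := by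
  rw [EuclideanSpace.volume_ball, Fintype.card_fin]
  have hG : Real.Gamma ((4 : ℕ) / 2 + 1) = 2 := by
    rw [show ((4 : ℕ) : ℝ) / 2 + 1 = (2 : ℕ) + 1 by norm_num, Real.Gamma_nat_eq_factorial]
    norm_num
  have hsq : √π ^ 4 = π ^ 2 := by
    rw [show 4 = 2 * 2 from rfl, pow_mul, sq_sqrt pi_nonneg]
  rw [hG, hsq]
  rcases le_total r 0 with hr | hr
  · simp [ENNReal.ofReal_of_nonpos hr]
  rw [← ENNReal.ofReal_pow hr, ← ENNReal.ofReal_mul (by positivity)]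
  have hπ : π ^ 2 / 2 ≤ 16 := by nlinarith [pi_le_four, pi_pos]
  exact ENNReal.ofReal_le_ofReal (by nlinarith [pow_nonneg hr 4])

theorem setLIntegral_rearr_mul_log_lt_top {g : E4 → ℝ} (hg : Measurable g)
    (hsupp : volume (Function.support g) ≠ ∞)
    (hgL : Integrable fun x => |g x| * log (2 + |g x|)) (V : ℝ) :
    ∫⁻ t in Ioo 0 V, ENNReal.ofReal (rearr g t * log (2 + 1 / t)) < ∞ := by
  have hw : ∫⁻ t in Ioo 0 V, ENNReal.ofReal (6 * t ^ (-3 / 4 : ℝ)) < ∞ := by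
    refine IntegrableOn.setLIntegral_lt_top (Integrable.const_mul ?_ 6)
    exact (intervalIntegral.intervalIntegrable_rpow' (a := 0) (b := V) (by norm_num)).1.mono_set
      Ioo_subset_Ioc_self
  have hF : ∫⁻ t in Ioo 0 V, ENNReal.ofReal (rearr g t * log (2 + rearr g t)) < ∞ :=
    calc ∫⁻ t in Ioo 0 V, ENNReal.ofReal (rearr g t * log (2 + rearr g t))
        ≤ ∫⁻ t in Ioi 0, ENNReal.ofReal (rearr g t * log (2 + rearr g t)) :=
          lintegral_mono_set Ioo_subset_Ioi_self
      _ = ∫⁻ x, ENNReal.ofReal (|g x| * log (2 + |g x|)) :=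
          lintegral_comp_rearr hg hsupp (φ := fun y => ENNReal.ofReal (y * log (2 + y)))
            (by fun_prop) (by simp)
      _ < ∞ := hgL.lintegral_lt_top
  calc ∫⁻ t in Ioo 0 V, ENNReal.ofReal (rearr g t * log (2 + 1 / t))
      ≤ ∫⁻ t in Ioo 0 V, (ENNReal.ofReal (6 * t ^ (-3 / 4 : ℝ)) +
          2 * ENNReal.ofReal (rearr g t * log (2 + rearr g t))) := by
        refine setLIntegral_mono' measurableSet_Ioo fun t ht => ?_
        rw [← ENNReal.ofReal_ofNat 2, ← ENNReal.ofReal_mul zero_le_two]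
        exact (ENNReal.ofReal_le_ofReal (mul_log_two_add_one_div_le (rearr_nonneg g t) ht.1)).trans
          ENNReal.ofReal_add_le
    _ = (∫⁻ t in Ioo 0 V, ENNReal.ofReal (6 * t ^ (-3 / 4 : ℝ))) +
          2 * ∫⁻ t in Ioo 0 V, ENNReal.ofReal (rearr g t * log (2 + rearr g t)) := by
        rw [lintegral_add_left (by fun_prop), lintegral_const_mul' _ _ ENNReal.ofNat_ne_top]
    _ < ∞ := ENNReal.add_lt_top.2 ⟨hw, ENNReal.mul_lt_top ENNReal.ofNat_lt_top hF⟩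

theorem log_two_add_one_div_volume_mul_integral_abs_le_LlogL {f : E4 → ℝ} {Ω : Set E4}
    (hΩ : MeasurableSet Ω) (hΩfin : volume Ω ≠ ∞) (hf : Measurable f) (hfΩ : MemLlogL f Ω) :
    log (2 + 1 / (volume Ω).toReal) * ∫ x in Ω, |f x| ≤ LlogL f Ω := by
  set g := Ω.indicator f
  set V := (volume Ω).toReal
  have hg : Measurable g := hf.indicator hΩ
  have hsuppV : volume (Function.support g) ≤ ENNReal.ofReal V := by
    rw [ENNReal.ofReal_toReal hΩfin]
    exact measure_mono (support_indicator_subset)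
  have hsupp : volume (Function.support g) ≠ ∞ :=
    ne_top_of_le_ne_top ENNReal.ofReal_ne_top hsuppV
  have hcomp : ∀ φ : ℝ → ℝ, φ 0 = 0 → (fun x => φ (g x)) = Ω.indicator fun x => φ (f x) :=
    fun φ hφ => (indicator_comp_of_zero (g := φ) hφ).symm
  have hgL : Integrable fun x => |g x| * log (2 + |g x|) := by
    rw [hcomp (fun y => |y| * log (2 + |y|)) (by simp), integrable_indicator_iff hΩ]
    exact hfΩ
  have hL1 : ∫ x in Ω, |f x| = (∫⁻ t in Ioo 0 V, ENNReal.ofReal (rearr g t)).toReal := by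
    rw [← integral_indicator hΩ, ← hcomp _ abs_zero,
      integral_eq_lintegral_of_nonneg_ae (ae_of_all _ fun _ => abs_nonneg _)
        hg.abs.aestronglyMeasurable,
      setLIntegral_Ioo_comp_rearr hg hsupp ENNReal.ofReal_zero hsuppV,
      lintegral_comp_rearr hg hsupp ENNReal.measurable_ofReal ENNReal.ofReal_zero]
  have hV : 0 ≤ 1 / V := one_div_nonneg.2 ENNReal.toReal_nonneg
  have hlogV : 0 ≤ log (2 + 1 / V) := log_nonneg (by linarith)
  have hlog : ∀ t ∈ Ioo 0 V, log (2 + 1 / V) ≤ log (2 + 1 / t) := fun t ht =>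
    log_le_log (by linarith) (by linarith [one_div_le_one_div_of_le ht.1 ht.2.le])
  have hLlogL : LlogL f Ω =
      (∫⁻ t in Ioo 0 V, ENNReal.ofReal (rearr g t * log (2 + 1 / t))).toReal := by
    refine integral_eq_lintegral_of_nonneg_ae ?_ ?_
    · exact (ae_restrict_iff' measurableSet_Ioo).2
        (ae_of_all _ fun t ht => mul_nonneg (rearr_nonneg g t) (hlogV.trans (hlog t ht)))
    · refine ((aemeasurable_rearr hg hsupp).mono_measure ?_).mul (by fun_prop)
        |>.aestronglyMeasurable
      exact Measure.restrict_mono Ioo_subset_Ioi_self le_rfl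
  have hmono : ENNReal.ofReal (log (2 + 1 / V)) * ∫⁻ t in Ioo 0 V, ENNReal.ofReal (rearr g t) ≤
      ∫⁻ t in Ioo 0 V, ENNReal.ofReal (rearr g t * log (2 + 1 / t)) := by
    rw [← lintegral_const_mul' _ _ ENNReal.ofReal_ne_top]
    refine setLIntegral_mono' measurableSet_Ioo fun t ht => ?_
    rw [← ENNReal.ofReal_mul hlogV, mul_comm]
    exact ENNReal.ofReal_le_ofReal (mul_le_mul_of_nonneg_left (hlog t ht) (rearr_nonneg g t))
  rw [hL1, hLlogL, ← ENNReal.toReal_ofReal hlogV, ← ENNReal.toReal_mul]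
  exact ENNReal.toReal_mono (setLIntegral_rearr_mul_log_lt_top hg hsupp hgL V).ne hmono

/-- Lemma: for `f ∈ L log L(B_r(x₀))`, `r ∈ (0, 1/2]`, one has
`‖f‖_{L¹(B_r(x₀))} ≤ C (log(1/r))⁻¹ ‖f‖_{L log L(B_r(x₀))}` with a universal constant. -/
theorem l1_bound_by_LlogL :
    ∃ C : ℝ, 0 < C ∧ ∀ (f : E4 → ℝ) (x₀ : E4) (r : ℝ),
      0 < r → r ≤ 1 / 2 → Measurable f → MemLlogL f (ball x₀ r) →
      ∫ x in ball x₀ r, |f x| ≤ C * (Real.log (1 / r))⁻¹ * LlogL f (ball x₀ r) := by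
  refine ⟨2, two_pos, fun f x₀ r hr0 hr hf hfB => ?_⟩
  set V := (volume (ball x₀ r)).toReal
  set I := ∫ x in ball x₀ r, |f x|
  have hV0 : 0 < V :=
    ENNReal.toReal_pos (measure_ball_pos volume x₀ hr0).ne' measure_ball_lt_top.ne
  have hVr : V ≤ 16 * r ^ 4 :=
    ENNReal.toReal_le_of_le_ofReal (by positivity) (volume_ball_le x₀ r)
  have hlog := log_one_div_le_two_mul_log_two_add_one_div hr0 hr hV0 hVr
  have hkey := log_two_add_one_div_volume_mul_integral_abs_le_LlogL measurableSet_ball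
    measure_ball_lt_top.ne hf hfB
  have hL : 0 < log (1 / r) := log_pos (by rw [lt_div_iff₀ hr0]; linarith)
  have hI : 0 ≤ I := integral_nonneg fun _ => abs_nonneg _
  calc I = 2 * (log (1 / r))⁻¹ * (log (1 / r) / 2 * I) := by field_simp
    _ ≤ 2 * (log (1 / r))⁻¹ * LlogL f (ball x₀ r) := by
        gcongr
        exact (mul_le_mul_of_nonneg_right (by linarith) hI).trans hkey
end
end

section
/- Let φ: [0,∞) → [0,∞) be increasing with lim_{t→∞} φ(t)/(t log t) = ∞, and let {f_k} satisfy ∫ φ(|f_k|) ≤ Λ uniformly. Then lim_{δ→0} sup_k ‖f_k‖_{L log L(B_{2δ})} = 0; i.e., the L log L norms of f_k do not concentrate. -/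
/-!
Since `φ(t)` eventually dominates any multiple of `t log t`, and `log (2 + t) ≤ 2 log t` for
`t ≥ 2`, for every `η > 0` there is `K` with `t log (2 + t) ≤ K + η φ(t)` for all `t ≥ 0`.
Integrating over a set `s` gives `∫_s |f_k| log (2 + |f_k|) ≤ K |s| + η Λ` uniformly in `k`:
choose `η` to make the second term small, then `s` of small measure. Balls `B_{2δ}` qualify
as `δ → 0`, because the balls around a point shrink to a null set.
-/

open MeasureTheory Metric Real Filter

noncomputable section

open scoped ENNReal Topology

theorem Real.log_two_add_le_two_mul_log {t : ℝ} (ht : 2 ≤ t) : log (2 + t) ≤ 2 * log t := by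
  calc log (2 + t) ≤ log (t ^ 2) := log_le_log (by linarith) (by nlinarith)
    _ = 2 * log t := by rw [log_pow]; norm_num

theorem exists_mul_log_two_add_le_add_mul {φ : ℝ → ℝ} (hφ0 : ∀ t, 0 ≤ t → 0 ≤ φ t)
    (hgrow : Tendsto (fun t => φ t / (t * log t)) atTop atTop) {η : ℝ} (hη : 0 < η) :
    ∃ K, ∀ t, 0 ≤ t → t * log (2 + t) ≤ K + η * φ t := by
  obtain ⟨M₀, hM₀⟩ := eventually_atTop.mp (hgrow.eventually_ge_atTop (2 / η))
  set M := max M₀ 2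
  have hM2 : 2 ≤ M := le_max_right M₀ 2
  have hK0 : 0 ≤ M * log (2 + M) := mul_nonneg (by linarith) (log_nonneg (by linarith))
  refine ⟨M * log (2 + M), fun t ht => ?_⟩
  rcases le_or_gt t M with htM | hMt
  · have hK : t * log (2 + t) ≤ M * log (2 + M) :=
      mul_le_mul htM (log_le_log (by linarith) (by linarith)) (log_nonneg (by linarith))
        (by linarith)
    linarith [mul_nonneg hη.le (hφ0 t ht)]
  · have ht2 : 2 ≤ t := hM2.trans hMt.le
    have htlog : 0 < t * log t := mul_pos (by linarith) (log_pos (by linarith))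
    have hφt : 2 * (t * log t) ≤ η * φ t := by
      have := hM₀ t ((le_max_left M₀ 2).trans hMt.le)
      rw [div_le_div_iff₀ hη htlog] at this
      linarith
    have hlog := mul_le_mul_of_nonneg_left (log_two_add_le_two_mul_log ht2) ht
    linarith

section SetIntegral

variable {α : Type*} [MeasurableSpace α] {μ : Measure α}

theorem setIntegral_le_mul_measureReal_add {g h : α → ℝ} {s : Set α} {K η : ℝ}
    (hs : μ s ≠ ∞) (hg : ∀ x, 0 ≤ g x) (hh : Integrable h μ) (hh0 : ∀ x, 0 ≤ h x) (hη : 0 ≤ η)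
    (hgh : ∀ x, g x ≤ K + η * h x) :
    ∫ x in s, g x ∂μ ≤ K * μ.real s + η * ∫ x, h x ∂μ := by
  have hconst : IntegrableOn (fun _ => K) s μ := integrableOn_const hs
  have hηh : IntegrableOn (fun x => η * h x) s μ := (hh.const_mul η).integrableOn
  calc ∫ x in s, g x ∂μ ≤ ∫ x in s, (K + η * h x) ∂μ :=
        integral_mono_of_nonneg (ae_of_all _ hg) (hconst.add hηh) (ae_of_all _ hgh)
    _ = K * μ.real s + η * ∫ x in s, h x ∂μ := by
        rw [integral_add hconst hηh, setIntegral_const, integral_const_mul, smul_eq_mul, mul_comm]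
    _ ≤ K * μ.real s + η * ∫ x, h x ∂μ := by
        grw [setIntegral_le_integral hh (ae_of_all _ hh0)]

theorem exists_setIntegral_mul_log_two_add_lt {ι : Type*} {φ : ℝ → ℝ}
    (hφ0 : ∀ t, 0 ≤ t → 0 ≤ φ t) (hgrow : Tendsto (fun t => φ t / (t * log t)) atTop atTop)
    {f : ι → α → ℝ} {Λ : ℝ} (hint : ∀ i, Integrable (fun x => φ |f i x|) μ)
    (hbd : ∀ i, ∫ x, φ |f i x| ∂μ ≤ Λ) {ε : ℝ} (hε : 0 < ε) :
    ∃ r > 0, ∀ i s, μ s ≤ ENNReal.ofReal r →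
      ∫ x in s, |f i x| * log (2 + |f i x|) ∂μ < ε := by
  set η := ε / (2 * (|Λ| + 1))
  have hη : 0 < η := by positivity
  obtain ⟨K, hK⟩ := exists_mul_log_two_add_le_add_mul hφ0 hgrow hη
  set r := ε / (2 * (|K| + 1))
  refine ⟨r, by positivity, fun i s hs => ?_⟩
  have hs_real : μ.real s ≤ r := ENNReal.toReal_le_of_le_ofReal (by positivity) hs
  have hsmall (a : ℝ) (ha : 0 ≤ a) : a * (ε / (2 * (a + 1))) < ε / 2 := by
    rw [mul_div_assoc', div_lt_div_iff₀ (by positivity) two_pos]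
    nlinarith
  calc ∫ x in s, |f i x| * log (2 + |f i x|) ∂μ ≤ K * μ.real s + η * ∫ x, φ |f i x| ∂μ :=
        setIntegral_le_mul_measureReal_add (ne_top_of_le_ne_top ENNReal.ofReal_ne_top hs)
          (fun x => mul_nonneg (abs_nonneg _) (log_nonneg (by linarith [abs_nonneg (f i x)])))
          (hint i) (fun x => hφ0 _ (abs_nonneg _)) hη.le (fun x => hK _ (abs_nonneg _))
    _ ≤ |K| * r + η * |Λ| := by
        grw [(hbd i).trans (le_abs_self Λ), ← hs_real, le_abs_self K]
    _ < ε := by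
        have hKr : |K| * r < ε / 2 := hsmall _ (abs_nonneg K)
        have hηΛ : η * |Λ| < ε / 2 := by rw [mul_comm]; exact hsmall _ (abs_nonneg Λ)
        linarith

end SetIntegral

theorem exists_pos_measure_ball_le {X : Type*} [MetricSpace X] [MeasurableSpace X]
    [OpensMeasurableSpace X] (μ : Measure X) [IsLocallyFiniteMeasure μ] [NullSingletonClass μ]
    (x : X) {c : ℝ≥0∞} (hc : 0 < c) : ∃ ρ > 0, μ (ball x ρ) ≤ c := by
  obtain ⟨R, hR, hRfin⟩ : ∃ R > 0, μ (ball x R) ≠ ∞ := by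
    obtain ⟨s, hs, hμs⟩ := μ.finiteAt_nhds x
    obtain ⟨R, hR, hRs⟩ := Metric.mem_nhds_iff.mp hs
    exact ⟨R, hR, ((measure_mono hRs).trans_lt hμs).ne⟩
  have hlim : Tendsto (fun ρ => μ (ball x ρ)) (𝓝[>] 0) (𝓝 0) := by
    have := tendsto_measure_biInter_gt (μ := μ) (s := ball x) (a := (0 : ℝ))
      (fun r _ => measurableSet_ball.nullMeasurableSet)
      (fun _ _ _ hij => ball_subset_ball hij) ⟨R, hR, hRfin⟩
    rwa [biInter_gt_ball, closedBall_zero, measure_singleton] at this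
  obtain ⟨ρ, hρ, hρc⟩ :=
    ((hlim.eventually (ge_mem_nhds hc)).and self_mem_nhdsWithin).exists
  exact ⟨ρ, hρc, hρ⟩

theorem LlogL_non_concentration_general
    (φ : ℝ → ℝ) (hφ0 : ∀ t, 0 ≤ t → 0 ≤ φ t)
    (hgrow : Tendsto (fun t => φ t / (t * Real.log t)) atTop atTop)
    (f : ℕ → E4 → ℝ) (Λ : ℝ)
    (hint : ∀ k, Integrable (fun x => φ |f k x|))
    (hbd : ∀ k, (∫ x, φ |f k x|) ≤ Λ) :
    ∀ ε > (0:ℝ), ∃ δ₀ > (0:ℝ), ∀ δ : ℝ, 0 < δ → δ ≤ δ₀ → ∀ k,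
      (∫ x in ball (0:E4) (2 * δ), |f k x| * Real.log (2 + |f k x|)) < ε := by
  intro ε hε
  obtain ⟨r, hr, hsmall⟩ := exists_setIntegral_mul_log_two_add_lt hφ0 hgrow hint hbd hε
  obtain ⟨ρ, hρ, hball⟩ := exists_pos_measure_ball_le volume (0 : E4) (ENNReal.ofReal_pos.mpr hr)
  refine ⟨ρ / 2, by positivity, fun δ _ hδ k => hsmall k _ ?_⟩
  exact (measure_mono (ball_subset_ball (by linarith))).trans hball

/-- Non-concentration of the `L log L` norm under a uniform Orlicz bound: if
`φ : [0,∞) → [0,∞)` is increasing with `φ(t)/(t log t) → ∞` and `∫ φ(|f_k|) ≤ Λ` uniformly,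
then `lim_{δ→0} sup_k ‖f_k‖_{L log L(B_{2δ})} = 0`, where
`‖f‖_{L log L(E)} = ∫_E |f| log(2 + |f|)`. -/
theorem LlogL_non_concentration
    (φ : ℝ → ℝ) (hφ0 : ∀ t, 0 ≤ t → 0 ≤ φ t) (hmono : MonotoneOn φ (Set.Ici 0))
    (hgrow : Tendsto (fun t => φ t / (t * Real.log t)) atTop atTop)
    (f : ℕ → E4 → ℝ) (Λ : ℝ)
    (hmeas : ∀ k, Measurable (f k))
    (hint : ∀ k, Integrable (fun x => φ |f k x|))
    (hbd : ∀ k, (∫ x, φ |f k x|) ≤ Λ) :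
    ∀ ε > (0:ℝ), ∃ δ₀ > (0:ℝ), ∀ δ : ℝ, 0 < δ → δ ≤ δ₀ → ∀ k,
      (∫ x in ball (0:E4) (2 * δ), |f k x| * Real.log (2 + |f k x|)) < ε :=
  LlogL_non_concentration_general φ hφ0 hgrow f Λ hint hbd
end
end
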